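/- arXiv:2502.16192 — 3 statements merged into one kernel-verified Lean document; each statement's English description precedes it below -/
import Mathlib

section
/- Let (X,F,μ) and (Y,G,ν) be probability spaces, λ = μ × ν, and for each n let gₙ : X → ℝ and hₙ : Y → ℝ be measurable with |gₙ| ≤ 1, |hₙ| ≤ 1, ∫ gₙ dμ = 0, ∫ hₙ dν = 0. If (uₙ) is a real sequence with ∑ₙ |uₙ| ≤ 1, then f(x,y) = 1 + ∑ₙ uₙ gₙ(x) hₙ(y) is a probability density with respect to λ whose induced measure has marginals μ and ν. -/
/-!
Each term `uₙ gₙ(x) hₙ(y)` is bounded by `|uₙ|`, so `|f - 1| ≤ ∑ |uₙ| ≤ 1` and the series may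
be integrated term by term over any measurable set. Over a strip `A × Y` (resp. `X × B`)
Fubini turns the `n`-th term into `uₙ (∫_A gₙ dμ)(∫ hₙ dν) = 0`
(resp. `uₙ (∫ gₙ dμ)(∫_B hₙ dν) = 0`), so only the constant `1` contributes and the strip
has mass `μ A` (resp. `ν B`).
-/

open MeasureTheory

lemma abs_mul_le_abs_of_abs_le_one {a b : ℝ} (hb : |b| ≤ 1) : |a * b| ≤ |a| := by
  simpa only [abs_mul] using mul_le_of_le_one_right (abs_nonneg a) hb

section WeightedSeries

variable {α : Type*} {u : ℕ → ℝ} {φ : ℕ → α → ℝ}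

lemma abs_tsum_mul_le (hu : Summable fun n => |u n|) (hφ : ∀ n z, |φ n z| ≤ 1) (z : α) :
    |∑' n, u n * φ n z| ≤ ∑' n, |u n| :=
  tsum_of_norm_bounded (f := fun n => u n * φ n z) hu.hasSum fun n =>
    abs_mul_le_abs_of_abs_le_one (hφ n z)

lemma one_add_tsum_mul_nonneg (hu : Summable fun n => |u n|) (hu1 : ∑' n, |u n| ≤ 1)
    (hφ : ∀ n z, |φ n z| ≤ 1) (z : α) : 0 ≤ 1 + ∑' n, u n * φ n z := by
  linarith [(abs_le.1 ((abs_tsum_mul_le hu hφ z).trans hu1)).1]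

variable [MeasurableSpace α]

lemma measurable_tsum_mul (hu : Summable fun n => |u n|) (hφ : ∀ n z, |φ n z| ≤ 1)
    (hφm : ∀ n, Measurable (φ n)) : Measurable fun z => ∑' n, u n * φ n z := by
  refine measurable_of_tendsto_metrizable
    (fun N => Finset.measurable_sum (Finset.range N) fun n _ => (hφm n).const_mul (u n)) ?_
  refine tendsto_pi_nhds.2 fun z => ?_
  exact (Summable.of_norm_bounded hu fun n => abs_mul_le_abs_of_abs_le_one (hφ n z)).hasSum
    |>.tendsto_sum_nat

variable (ρ : Measure α) [IsFiniteMeasure ρ]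

lemma integrable_tsum_mul (hu : Summable fun n => |u n|) (hφ : ∀ n z, |φ n z| ≤ 1)
    (hφm : ∀ n, Measurable (φ n)) : Integrable (fun z => ∑' n, u n * φ n z) ρ :=
  .of_bound (measurable_tsum_mul hu hφ hφm).aestronglyMeasurable _
    (.of_forall (abs_tsum_mul_le hu hφ))

lemma integral_tsum_mul (hu : Summable fun n => |u n|) (hφ : ∀ n z, |φ n z| ≤ 1)
    (hφm : ∀ n, Measurable (φ n)) :
    ∫ z, ∑' n, u n * φ n z ∂ρ = ∑' n, u n * ∫ z, φ n z ∂ρ := by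
  have hφi : ∀ n, Integrable (φ n) ρ := fun n =>
    .of_bound (hφm n).aestronglyMeasurable 1 (.of_forall (hφ n))
  simp_rw [← integral_const_mul]
  refine (integral_tsum_of_summable_integral_norm (fun n => (hφi n).const_mul (u n)) ?_).symm
  refine (hu.mul_right (ρ.real Set.univ)).of_nonneg_of_le
    (fun n => integral_nonneg fun z => norm_nonneg _) fun n => ?_
  calc ∫ z, ‖u n * φ n z‖ ∂ρ ≤ ∫ _, |u n| ∂ρ :=
        integral_mono (hφi n |>.const_mul (u n)).norm (integrable_const _)
          fun z => abs_mul_le_abs_of_abs_le_one (hφ n z)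
    _ = |u n| * ρ.real Set.univ := by rw [integral_const, smul_eq_mul, mul_comm]

lemma integral_one_add_tsum_mul (hu : Summable fun n => |u n|) (hφ : ∀ n z, |φ n z| ≤ 1)
    (hφm : ∀ n, Measurable (φ n)) :
    ∫ z, 1 + ∑' n, u n * φ n z ∂ρ = ρ.real Set.univ + ∑' n, u n * ∫ z, φ n z ∂ρ := by
  rw [integral_add (integrable_const 1) (integrable_tsum_mul _ hu hφ hφm),
    integral_tsum_mul _ hu hφ hφm, integral_const, smul_eq_mul, mul_one]

lemma withDensity_one_add_tsum_mul_apply_eq_self (hu : Summable fun n => |u n|)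
    (hu1 : ∑' n, |u n| ≤ 1) (hφ : ∀ n z, |φ n z| ≤ 1) (hφm : ∀ n, Measurable (φ n))
    {H : Set α} (hH : MeasurableSet H) (hφH : ∀ n, ∫ z in H, φ n z ∂ρ = 0) :
    ρ.withDensity (fun z => ENNReal.ofReal (1 + ∑' n, u n * φ n z)) H = ρ H := by
  have hint : Integrable (fun z => 1 + ∑' n, u n * φ n z) (ρ.restrict H) :=
    (integrable_const 1).add (integrable_tsum_mul _ hu hφ hφm)
  rw [withDensity_apply _ hH, ← ofReal_integral_eq_lintegral_ofReal hint
      (.of_forall (one_add_tsum_mul_nonneg hu hu1 hφ)),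
    integral_one_add_tsum_mul _ hu hφ hφm, measureReal_restrict_apply_univ]
  simp only [hφH, mul_zero, tsum_zero, add_zero]
  exact ENNReal.ofReal_toReal (measure_ne_top _ _)

end WeightedSeries

theorem stmt2
    {X Y : Type*} [MeasurableSpace X] [MeasurableSpace Y]
    (μ : Measure X) (ν : Measure Y)
    [IsProbabilityMeasure μ] [IsProbabilityMeasure ν]
    (g : ℕ → X → ℝ) (h : ℕ → Y → ℝ) (u : ℕ → ℝ)
    (hg : ∀ n, Measurable (g n)) (hh : ∀ n, Measurable (h n))
    (hgb : ∀ n x, |g n x| ≤ 1) (hhb : ∀ n y, |h n y| ≤ 1)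
    (hgi : ∀ n, ∫ x, g n x ∂μ = 0) (hhi : ∀ n, ∫ y, h n y ∂ν = 0)
    (hu : Summable (fun n => |u n|)) (hu1 : ∑' n, |u n| ≤ 1)
    (f : X × Y → ℝ)
    (hf : ∀ z : X × Y, f z = 1 + ∑' n, u n * g n z.1 * h n z.2) :
    (∀ z, 0 ≤ f z) ∧ (∫ z, f z ∂(μ.prod ν)) = 1 ∧
    IsProbabilityMeasure ((μ.prod ν).withDensity (fun z => ENNReal.ofReal (f z))) ∧
    (∀ A : Set X, MeasurableSet A →
      (μ.prod ν).withDensity (fun z => ENNReal.ofReal (f z))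
        (A ×ˢ (Set.univ : Set Y)) = μ A) ∧
    (∀ B : Set Y, MeasurableSet B →
      (μ.prod ν).withDensity (fun z => ENNReal.ofReal (f z))
        ((Set.univ : Set X) ×ˢ B) = ν B) := by
  set φ : ℕ → X × Y → ℝ := fun n z => g n z.1 * h n z.2
  have hφm : ∀ n, Measurable (φ n) := fun n =>
    ((hg n).comp measurable_fst).mul ((hh n).comp measurable_snd)
  have hφ : ∀ n z, |φ n z| ≤ 1 := fun n z => by
    simpa only [φ, abs_mul] using mul_le_one₀ (hgb n z.1) (abs_nonneg _) (hhb n z.2)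
  have hfφ : f = fun z => 1 + ∑' n, u n * φ n z :=
    funext fun z => by simp only [hf, φ, mul_assoc]
  have hmarg : ∀ H, MeasurableSet H → (∀ n, ∫ z in H, φ n z ∂μ.prod ν = 0) →
      (μ.prod ν).withDensity (fun z => ENNReal.ofReal (f z)) H = μ.prod ν H := fun H hH =>
    hfφ ▸ withDensity_one_add_tsum_mul_apply_eq_self _ hu hu1 hφ hφm hH
  have hfst : ∀ A, MeasurableSet A → (μ.prod ν).withDensity (fun z => ENNReal.ofReal (f z))
      (A ×ˢ Set.univ) = μ A := fun A hA => by
    rw [hmarg _ (hA.prod .univ) fun n => by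
        rw [setIntegral_prod_mul, Measure.restrict_univ, hhi, mul_zero],
      Measure.prod_prod, measure_univ, mul_one]
  have hsnd : ∀ B, MeasurableSet B → (μ.prod ν).withDensity (fun z => ENNReal.ofReal (f z))
      (Set.univ ×ˢ B) = ν B := fun B hB => by
    rw [hmarg _ (MeasurableSet.univ.prod hB) fun n => by
        rw [setIntegral_prod_mul, Measure.restrict_univ, hgi, zero_mul],
      Measure.prod_prod, measure_univ, one_mul]
  refine ⟨hfφ ▸ one_add_tsum_mul_nonneg hu hu1 hφ, ?_, ⟨by simpa using hfst _ .univ⟩,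
    hfst, hsnd⟩
  simp [hfφ, integral_one_add_tsum_mul _ hu hφ hφm, φ, integral_prod_mul, hgi]
end

section
/- Let p be a probability measure on [0,1]² with both marginals equal to Lebesgue measure m on [0,1]. Fix k ≥ 1 and define g as the piecewise-constant density with d_{j,h} = k² p(Iⱼ × I_h) on the grid cells Iⱼ × I_h. Then the bounded Lipschitz distance between p and P_g satisfies d_BL(p, P_g) ≤ 2√2 / k, where d_BL(p,q) = sup over 1-Lipschitz φ : [0,1]² → [−1,1] of |∫ φ dp − ∫ φ dq|. -/
open MeasureTheory Set Function Filter

/-!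
The measure `P_g` gives each grid cell `Iⱼ × I_h` exactly the mass `p(Iⱼ × I_h)`, since its density
there is `k² p(Iⱼ × I_h)` on a set of area `1/k²`; and both `p` (through its uniform marginals) and
`P_g` are carried by `(0,1]²`, which the cells tile. On a cell, a 1-Lipschitz `φ` stays within the
cell diameter `√2/k` of its value at a corner `c`, so there
`|∫ φ dp - ∫ φ dP_g| = |∫ (φ - φ c) dp - ∫ (φ - φ c) dP_g| ≤ 2 (√2/k) p(Iⱼ × I_h)`.
Summing over the cells gives `2√2/k`.
-/

section Partition

variable {α ι : Type*} [MeasurableSpace α] [Fintype ι] {μ ν : Measure α} {Q : ι → Set α}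

theorem measure_univ_eq_of_ae_mem_iUnion (hQm : ∀ i, MeasurableSet (Q i))
    (hQd : Pairwise (Disjoint on Q)) (hμ : ∀ᵐ x ∂μ, x ∈ ⋃ i, Q i) (hν : ∀ᵐ x ∂ν, x ∈ ⋃ i, Q i)
    (hμν : ∀ i, μ (Q i) = ν (Q i)) : μ univ = ν univ := by
  rw [← measure_congr (eventuallyEq_univ (s := ⋃ i, Q i) |>.mpr hμ),
    ← measure_congr (eventuallyEq_univ (s := ⋃ i, Q i) |>.mpr hν), measure_iUnion hQd hQm,
    measure_iUnion hQd hQm]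
  simp_rw [hμν]

theorem integral_eq_sum_setIntegral_of_ae_mem_iUnion {f : α → ℝ}
    (hQm : ∀ i, MeasurableSet (Q i)) (hQd : Pairwise (Disjoint on Q))
    (hμ : ∀ᵐ x ∂μ, x ∈ ⋃ i, Q i) (hf : Integrable f μ) :
    ∫ x, f x ∂μ = ∑ i, ∫ x in Q i, f x ∂μ := by
  rw [← integral_iUnion_fintype hQm hQd fun i => hf.integrableOn,
    Measure.restrict_eq_self_of_ae_mem hμ]

theorem abs_setIntegral_sub_le_of_abs_sub_le {s : Set α} {f : α → ℝ} {c ε : ℝ}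
    (hμs : μ s ≠ ⊤) (hs : μ s = ν s) (hfμ : IntegrableOn f s μ) (hfν : IntegrableOn f s ν)
    (hf : ∀ x ∈ s, |f x - c| ≤ ε) :
    |∫ x in s, f x ∂μ - ∫ x in s, f x ∂ν| ≤ 2 * ε * μ.real s := by
  have hνs : ν s ≠ ⊤ := hs ▸ hμs
  have hνμ : ν.real s = μ.real s := by rw [measureReal_def, measureReal_def, hs]
  have hsplit : ∀ ρ : Measure α, ρ s ≠ ⊤ → IntegrableOn f s ρ →
      ∫ x in s, f x ∂ρ = ∫ x in s, (f x - c) ∂ρ + c * ρ.real s := by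
    intro ρ hρ hfρ
    rw [integral_sub hfρ (integrableOn_const hρ), setIntegral_const, smul_eq_mul]
    ring
  calc |∫ x in s, f x ∂μ - ∫ x in s, f x ∂ν|
      = |∫ x in s, (f x - c) ∂μ - ∫ x in s, (f x - c) ∂ν| := by
        rw [hsplit μ hμs hfμ, hsplit ν hνs hfν, hνμ, add_sub_add_right_eq_sub]
    _ ≤ ‖∫ x in s, (f x - c) ∂μ‖ + ‖∫ x in s, (f x - c) ∂ν‖ := abs_sub _ _
    _ ≤ ε * μ.real s + ε * μ.real s := by
        gcongr
        · exact norm_setIntegral_le_of_norm_le_const hμs.lt_top hf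
        · exact hνμ ▸ norm_setIntegral_le_of_norm_le_const hνs.lt_top hf
    _ = 2 * ε * μ.real s := by ring

theorem abs_integral_sub_le_of_ae_mem_iUnion [IsFiniteMeasure μ] {f : α → ℝ} {ε : ℝ}
    (hQm : ∀ i, MeasurableSet (Q i)) (hQd : Pairwise (Disjoint on Q))
    (hμ : ∀ᵐ x ∂μ, x ∈ ⋃ i, Q i) (hν : ∀ᵐ x ∂ν, x ∈ ⋃ i, Q i) (hμν : ∀ i, μ (Q i) = ν (Q i))
    (hfμ : Integrable f μ) (hfν : Integrable f ν) (c : ι → ℝ)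
    (hf : ∀ i, ∀ x ∈ Q i, |f x - c i| ≤ ε) :
    |∫ x, f x ∂μ - ∫ x, f x ∂ν| ≤ 2 * ε * μ.real univ := by
  rw [integral_eq_sum_setIntegral_of_ae_mem_iUnion hQm hQd hμ hfμ,
    integral_eq_sum_setIntegral_of_ae_mem_iUnion hQm hQd hν hfν, ← Finset.sum_sub_distrib,
    ← measureReal_congr (eventuallyEq_univ (s := ⋃ i, Q i) |>.mpr hμ),
    measureReal_iUnion_fintype hQd hQm, Finset.mul_sum]
  refine (Finset.abs_sum_le_sum_abs _ _).trans (Finset.sum_le_sum fun i _ => ?_)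
  exact abs_setIntegral_sub_le_of_abs_sub_le (measure_ne_top _ _) (hμν i) hfμ.integrableOn
    hfν.integrableOn (hf i)

end Partition

theorem ae_mem_prod_of_ae_map {α β : Type*} [MeasurableSpace α] [MeasurableSpace β]
    {μ : Measure (α × β)} {s : Set α} {t : Set β} (hs : ∀ᵐ x ∂μ.map Prod.fst, x ∈ s)
    (ht : ∀ᵐ y ∂μ.map Prod.snd, y ∈ t) : ∀ᵐ z ∂μ, z ∈ s ×ˢ t := by
  filter_upwards [ae_of_ae_map measurable_fst.aemeasurable hs,
    ae_of_ae_map measurable_snd.aemeasurable ht] with z h1 h2 using ⟨h1, h2⟩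

theorem sum_mul_indicator_one_of_mem {α ι : Type*} [Fintype ι] {A : ι → Set α}
    (hA : Pairwise (Disjoint on A)) {i : ι} {x : α} (hx : x ∈ A i) (f : ι → ℝ) :
    ∑ j, f j * (A j).indicator 1 x = f i := by
  rw [Finset.sum_eq_single i (fun j _ hji => ?_) (by simp), indicator_of_mem hx, Pi.one_apply,
    mul_one]
  rw [indicator_of_notMem ((hA hji).notMem_of_mem_right hx), mul_zero]

/-- Indices are `0`-based: `gridInterval k j` is the interval `I_{j+1}` of the paper. -/
def gridInterval (k : ℕ) (j : Fin k) : Set ℝ := Ioc ((j : ℝ) / k) (((j : ℝ) + 1) / k)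

def gridCell (k : ℕ) (jh : Fin k × Fin k) : Set (ℝ × ℝ) :=
  gridInterval k jh.1 ×ˢ gridInterval k jh.2

noncomputable def gridCorner (k : ℕ) (jh : Fin k × Fin k) : ℝ × ℝ :=
  (((jh.1 : ℝ) + 1) / k, ((jh.2 : ℝ) + 1) / k)

section Grid

variable {k : ℕ}

theorem mem_gridInterval_iff {j : Fin k} {x : ℝ} : x ∈ gridInterval k j ↔ ⌈x * k⌉₊ = j + 1 := by
  have hk : (0 : ℝ) < k := by exact_mod_cast j.pos
  rw [Nat.ceil_eq_iff (Nat.succ_ne_zero _), gridInterval, mem_Ioc, div_lt_iff₀ hk, le_div_iff₀ hk]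
  push_cast
  simp

theorem pairwise_disjoint_gridInterval : Pairwise (Disjoint on gridInterval k) := by
  refine fun i j hij => disjoint_left.mpr fun x hi hj => hij (Fin.ext ?_)
  have := (mem_gridInterval_iff.mp hi).symm.trans (mem_gridInterval_iff.mp hj)
  omega

theorem gridInterval_subset_Ioc (j : Fin k) : gridInterval k j ⊆ Ioc 0 1 := by
  have hk : (0 : ℝ) < k := by exact_mod_cast j.pos
  have hjk : (j : ℝ) + 1 ≤ k := by exact_mod_cast j.isLt
  refine Ioc_subset_Ioc (by positivity) ?_
  rwa [div_le_one hk]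

theorem iUnion_gridInterval (hk : 1 ≤ k) : ⋃ j, gridInterval k j = Ioc 0 1 := by
  refine (iUnion_subset gridInterval_subset_Ioc).antisymm fun x hx => mem_iUnion.mpr ?_
  have hk0 : (0 : ℝ) < k := by exact_mod_cast hk
  have hpos : 0 < ⌈x * k⌉₊ := Nat.ceil_pos.mpr (mul_pos hx.1 hk0)
  have hle : ⌈x * k⌉₊ ≤ k := Nat.ceil_le.mpr (mul_le_of_le_one_left hk0.le hx.2)
  exact ⟨⟨⌈x * k⌉₊ - 1, by omega⟩, mem_gridInterval_iff.mpr (by simp only; omega)⟩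

theorem volume_gridInterval (j : Fin k) : volume (gridInterval k j) = ENNReal.ofReal (1 / k) := by
  rw [gridInterval, Real.volume_Ioc]
  congr 1
  ring

theorem abs_sub_le_of_mem_gridInterval {j : Fin k} {x : ℝ} (hx : x ∈ gridInterval k j) :
    |x - ((j : ℝ) + 1) / k| ≤ 1 / k := by
  rw [abs_sub_comm, abs_of_nonneg (sub_nonneg.mpr hx.2)]
  have hleft := hx.1
  have hwidth : ((j : ℝ) + 1) / k = j / k + 1 / k := by ring
  linarith

theorem measurableSet_gridCell (jh : Fin k × Fin k) : MeasurableSet (gridCell k jh) :=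
  measurableSet_Ioc.prod measurableSet_Ioc

theorem pairwise_disjoint_gridCell : Pairwise (Disjoint on gridCell k) := by
  rintro ⟨i, j⟩ ⟨i', j'⟩ hne
  refine disjoint_prod.mpr ?_
  by_cases hi : i = i'
  · exact Or.inr (pairwise_disjoint_gridInterval fun hj => hne (Prod.ext hi hj))
  · exact Or.inl (pairwise_disjoint_gridInterval hi)

theorem iUnion_gridCell (hk : 1 ≤ k) : ⋃ jh, gridCell k jh = Ioc 0 1 ×ˢ Ioc 0 1 := by
  simp only [gridCell]
  rw [iUnion_prod, iUnion_gridInterval hk]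

theorem sum_sum_mul_indicator_of_mem_gridCell (d : Fin k → Fin k → ℝ) {jh : Fin k × Fin k}
    {z : ℝ × ℝ} (hz : z ∈ gridCell k jh) :
    ∑ j, ∑ h, d j h * (gridInterval k j).indicator 1 z.1 * (gridInterval k h).indicator 1 z.2 =
      d jh.1 jh.2 := by
  simp only [sum_mul_indicator_one_of_mem pairwise_disjoint_gridInterval hz.1,
    sum_mul_indicator_one_of_mem pairwise_disjoint_gridInterval hz.2]

theorem gridCorner_mem_gridCell (jh : Fin k × Fin k) : gridCorner k jh ∈ gridCell k jh := by
  have hk : (0 : ℝ) < k := by exact_mod_cast jh.1.pos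
  exact ⟨⟨div_lt_div_of_pos_right (lt_add_one _) hk, le_rfl⟩,
    ⟨div_lt_div_of_pos_right (lt_add_one _) hk, le_rfl⟩⟩

theorem gridCell_subset_Icc (jh : Fin k × Fin k) : gridCell k jh ⊆ Icc 0 1 ×ˢ Icc 0 1 :=
  prod_mono ((gridInterval_subset_Ioc _).trans Ioc_subset_Icc_self)
    ((gridInterval_subset_Ioc _).trans Ioc_subset_Icc_self)

theorem sqrt_sub_gridCorner_sq_le {jh : Fin k × Fin k} {z : ℝ × ℝ} (hz : z ∈ gridCell k jh) :
    Real.sqrt ((z.1 - (gridCorner k jh).1) ^ 2 + (z.2 - (gridCorner k jh).2) ^ 2) ≤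
      Real.sqrt 2 / k := by
  have hk : (0 : ℝ) ≤ 1 / k := by positivity
  have h1 := pow_le_pow_left₀ (abs_nonneg _) (abs_sub_le_of_mem_gridInterval hz.1) 2
  have h2 := pow_le_pow_left₀ (abs_nonneg _) (abs_sub_le_of_mem_gridInterval hz.2) 2
  rw [sq_abs] at h1 h2
  calc Real.sqrt ((z.1 - (gridCorner k jh).1) ^ 2 + (z.2 - (gridCorner k jh).2) ^ 2)
      ≤ Real.sqrt (2 * (1 / k) ^ 2) := Real.sqrt_le_sqrt (by simp only [gridCorner]; linarith)
    _ = Real.sqrt 2 / k := by rw [Real.sqrt_mul zero_le_two, Real.sqrt_sq hk, mul_one_div]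

theorem abs_sub_gridCorner_le {φ : ℝ × ℝ → ℝ}
    (hφ : ∀ z w : ℝ × ℝ, z ∈ Icc (0:ℝ) 1 ×ˢ Icc (0:ℝ) 1 → w ∈ Icc (0:ℝ) 1 ×ˢ Icc (0:ℝ) 1 →
      |φ z - φ w| ≤ Real.sqrt ((z.1 - w.1) ^ 2 + (z.2 - w.2) ^ 2))
    {jh : Fin k × Fin k} {z : ℝ × ℝ} (hz : z ∈ gridCell k jh) :
    |φ z - φ (gridCorner k jh)| ≤ Real.sqrt 2 / k :=
  (hφ _ _ (gridCell_subset_Icc jh hz) (gridCell_subset_Icc jh (gridCorner_mem_gridCell jh))).trans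
    (sqrt_sub_gridCorner_sq_le hz)

theorem volume_restrict_Ioc_gridInterval (j : Fin k) :
    volume.restrict (Ioc 0 1) (gridInterval k j) = ENNReal.ofReal (1 / k) := by
  rw [Measure.restrict_apply' measurableSet_Ioc,
    inter_eq_self_of_subset_left (gridInterval_subset_Ioc j), volume_gridInterval]

theorem withDensity_prod_gridCell {m : Measure ℝ} [SFinite m]
    (hm : ∀ j, m (gridInterval k j) = ENNReal.ofReal (1 / k)) {g : ℝ × ℝ → ℝ}
    {jh : Fin k × Fin k} {a : ℝ} (ha : 0 ≤ a) (hg : ∀ z ∈ gridCell k jh, g z = k ^ 2 * a) :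
    (m.prod m).withDensity (fun z => ENNReal.ofReal (g z)) (gridCell k jh) = ENNReal.ofReal a := by
  have hk : (k : ℝ) ≠ 0 := by exact_mod_cast jh.1.pos.ne'
  rw [withDensity_apply _ (measurableSet_gridCell jh),
    setLIntegral_congr_fun (measurableSet_gridCell jh) fun z hz => by rw [hg z hz],
    setLIntegral_const, gridCell, Measure.prod_prod, hm, hm, ← ENNReal.ofReal_mul (by positivity),
    ← ENNReal.ofReal_mul (by positivity)]
  congr 1
  field_simp

end Grid

theorem stmt10
    (k : ℕ) (hk : 1 ≤ k)
    (I : Fin k → Set ℝ)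
    (hI : ∀ j : Fin k, I j = Ioc ((j : ℝ) / k) (((j : ℝ) + 1) / k))
    (m : Measure ℝ) (hm : m = volume.restrict (Icc (0:ℝ) 1))
    (p : Measure (ℝ × ℝ)) [IsProbabilityMeasure p]
    (hp1 : p.map Prod.fst = m) (hp2 : p.map Prod.snd = m)
    (d : Fin k → Fin k → ℝ)
    (hd : ∀ j h, d j h = (k : ℝ) ^ 2 * (p ((I j) ×ˢ (I h))).toReal)
    (g : ℝ × ℝ → ℝ)
    (hg : ∀ z, g z = ∑ j : Fin k, ∑ h : Fin k,
      d j h * Set.indicator (I j) 1 z.1 * Set.indicator (I h) 1 z.2)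
    (Pg : Measure (ℝ × ℝ))
    (hPg : Pg = (m.prod m).withDensity (fun z => ENNReal.ofReal (g z))) :
    ∀ φ : ℝ × ℝ → ℝ, Measurable φ →
      (∀ z w : ℝ × ℝ, z ∈ Icc (0:ℝ) 1 ×ˢ Icc (0:ℝ) 1 →
        w ∈ Icc (0:ℝ) 1 ×ˢ Icc (0:ℝ) 1 →
        |φ z - φ w| ≤ Real.sqrt ((z.1 - w.1) ^ 2 + (z.2 - w.2) ^ 2)) →
      (∀ z ∈ Icc (0:ℝ) 1 ×ˢ Icc (0:ℝ) 1, φ z ∈ Icc (-1 : ℝ) 1) →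
      |∫ z, φ z ∂p - ∫ z, φ z ∂Pg| ≤ 2 * Real.sqrt 2 / k := by
  intro φ hφ hφ_lip hφ_bdd
  obtain rfl : I = gridInterval k := funext hI
  -- Lebesgue measure does not see the endpoint `0`, and `(0,1]` is tiled by the grid intervals.
  obtain rfl : m = volume.restrict (Ioc 0 1) :=
    hm.trans (Measure.restrict_congr_set Ioc_ae_eq_Icc).symm
  have hmarg : ∀ᵐ x ∂volume.restrict (Ioc (0 : ℝ) 1), x ∈ Ioc 0 1 :=
    ae_restrict_mem measurableSet_Ioc
  have hp_ae : ∀ᵐ z ∂p, z ∈ ⋃ jh, gridCell k jh := by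
    rw [iUnion_gridCell hk]
    exact ae_mem_prod_of_ae_map (hp1 ▸ hmarg) (hp2 ▸ hmarg)
  have hPg_ae : ∀ᵐ z ∂Pg, z ∈ ⋃ jh, gridCell k jh := by
    rw [hPg, iUnion_gridCell hk, Measure.prod_restrict]
    exact (withDensity_absolutelyContinuous _ _).ae_le
      (ae_restrict_mem (measurableSet_Ioc.prod measurableSet_Ioc))
  have hcells : ∀ jh, p (gridCell k jh) = Pg (gridCell k jh) := fun jh => by
    rw [hPg, withDensity_prod_gridCell volume_restrict_Ioc_gridInterval measureReal_nonneg
      fun z hz => by rw [hg, sum_sum_mul_indicator_of_mem_gridCell d hz, hd]; rfl,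
      ofReal_measureReal]
    rfl
  have : IsProbabilityMeasure Pg := ⟨(measure_univ_eq_of_ae_mem_iUnion measurableSet_gridCell
    pairwise_disjoint_gridCell hp_ae hPg_ae hcells).symm.trans measure_univ⟩
  have hint : ∀ (μ : Measure (ℝ × ℝ)) [IsFiniteMeasure μ], (∀ᵐ z ∂μ, z ∈ ⋃ jh, gridCell k jh) →
      Integrable φ μ := fun μ _ hμ => .of_bound hφ.aestronglyMeasurable 1 <|
    hμ.mono fun z hz => abs_le.mpr (hφ_bdd z (iUnion_subset gridCell_subset_Icc hz))
  calc |∫ z, φ z ∂p - ∫ z, φ z ∂Pg| ≤ 2 * (Real.sqrt 2 / k) * p.real univ :=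
        abs_integral_sub_le_of_ae_mem_iUnion measurableSet_gridCell pairwise_disjoint_gridCell
          hp_ae hPg_ae hcells (hint p hp_ae) (hint Pg hPg_ae) (fun jh => φ (gridCorner k jh))
          fun _ _ => abs_sub_gridCorner_le hφ_lip
    _ = 2 * Real.sqrt 2 / k := by rw [probReal_univ]; ring
end

section
/- Let F_μ, F_ν be the cumulative distribution functions of Borel probability measures μ, ν on ℝ, and let C : [0,1]² → [0,1] be a (bivariate) copula. Then F(x,y) = C(F_μ(x), F_ν(y)) is the cumulative distribution function of a Borel probability measure on ℝ² whose marginal distribution functions are F_μ and F_ν. -/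
/-!
Take a pair `(U, V) ∼ γ` with uniform marginals and push it forward along the quantile functions
`(Q_μ, Q_ν)`. Since `Q_μ u ≤ x ↔ u ≤ F_μ x` for `u ∈ (0, 1)`, which holds almost surely, the
event `{Q_μ U ≤ x, Q_ν V ≤ y}` agrees a.s. with `{U ≤ F_μ x, V ≤ F_ν y}`, whose probability is
`C (F_μ x, F_ν y)`; for the same reason `Q_μ U ∼ μ` and `Q_ν V ∼ ν` (inverse transform sampling).
-/

open MeasureTheory Set Filter ProbabilityTheory

namespace MeasureTheory.Measure

variable {α β α' β' : Type*} [MeasurableSpace α] [MeasurableSpace β] [MeasurableSpace α']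
  [MeasurableSpace β'] {ρ : Measure (α × β)}

lemma fst_map_prodMap {f : α → α'} {g : β → β'} (hf : Measurable f) (hg : Measurable g) :
    (ρ.map (Prod.map f g)).fst = ρ.fst.map f := by
  rw [Measure.fst, Measure.fst, map_map measurable_fst (hf.prodMap hg), map_map hf measurable_fst]
  rfl

lemma snd_map_prodMap {f : α → α'} {g : β → β'} (hf : Measurable f) (hg : Measurable g) :
    (ρ.map (Prod.map f g)).snd = ρ.snd.map g := by
  rw [Measure.snd, Measure.snd, map_map measurable_snd (hf.prodMap hg), map_map hg measurable_snd]
  rfl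

lemma set_prod_ae_eq_of_fst_snd {s s' : Set α} {t t' : Set β} (hs : s =ᵐ[ρ.fst] s')
    (ht : t =ᵐ[ρ.snd] t') : s ×ˢ t =ᵐ[ρ] s' ×ˢ t' :=
  (ae_eq_comp measurable_fst.aemeasurable hs).inter (ae_eq_comp measurable_snd.aemeasurable ht)

end MeasureTheory.Measure

/-- The value `0` off `(0, 1)` is arbitrary: only the a.e. behaviour for the uniform law matters. -/
noncomputable def quantile (μ : Measure ℝ) (u : ℝ) : ℝ :=
  if u ∈ Ioo (0 : ℝ) 1 then sInf {t | u ≤ cdf μ t} else 0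

lemma quantile_le_iff (μ : Measure ℝ) [IsProbabilityMeasure μ] {u : ℝ} (hu : u ∈ Ioo (0 : ℝ) 1)
    (x : ℝ) : quantile μ u ≤ x ↔ u ≤ cdf μ x := by
  rw [quantile, if_pos hu]
  have hne : {t | u ≤ cdf μ t}.Nonempty :=
    (((tendsto_cdf_atTop μ).eventually (eventually_gt_nhds hu.2)).exists).imp fun _ => le_of_lt
  have hbdd : BddBelow {t | u ≤ cdf μ t} := by
    obtain ⟨b, hb⟩ := eventually_atBot.1
      ((tendsto_cdf_atBot μ).eventually (eventually_lt_nhds hu.1))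
    exact ⟨b, fun t ht => le_of_not_ge fun htb => (hb t htb).not_ge ht⟩
  refine ⟨fun h => ?_, fun h => csInf_le hbdd h⟩
  have h_right : ∀ t ∈ Ioi x, u ≤ cdf μ t := fun t ht => by
    obtain ⟨s, hs, hst⟩ := exists_lt_of_csInf_lt hne (h.trans_lt ht)
    exact hs.trans (monotone_cdf μ hst.le)
  exact ge_of_tendsto (((cdf μ).right_continuous x).mono Ioi_subset_Ici_self).tendsto
    (eventually_nhdsWithin_of_forall h_right)

lemma measurable_quantile (μ : Measure ℝ) [IsProbabilityMeasure μ] :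
    Measurable (quantile μ) := by
  refine measurable_of_Iic fun x => ?_
  have h_preimage : quantile μ ⁻¹' Iic x =
      Ioo 0 1 ∩ Iic (cdf μ x) ∪ (Ioo 0 1)ᶜ ∩ {_u | (0 : ℝ) ≤ x} := by
    ext u
    by_cases hu : u ∈ Ioo (0 : ℝ) 1
    · simp [hu, quantile_le_iff μ hu]
    · simp [hu, quantile]
  rw [h_preimage]
  exact (measurableSet_Ioo.inter measurableSet_Iic).union
    (measurableSet_Ioo.compl.inter (.const _))

lemma ae_mem_Ioo_restrict_Icc (a b : ℝ) : ∀ᵐ u ∂volume.restrict (Icc a b), u ∈ Ioo a b := by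
  rw [← Measure.restrict_congr_set Ioo_ae_eq_Icc]
  exact ae_restrict_mem measurableSet_Ioo

lemma quantile_preimage_Iic_ae_eq (μ : Measure ℝ) [IsProbabilityMeasure μ] (x : ℝ) :
    quantile μ ⁻¹' Iic x =ᵐ[volume.restrict (Icc (0 : ℝ) 1)] Iic (cdf μ x) := by
  filter_upwards [ae_mem_Ioo_restrict_Icc 0 1] with u hu
  exact propext (quantile_le_iff μ hu x)

theorem map_quantile_restrict_Icc (μ : Measure ℝ) [IsProbabilityMeasure μ] :
    (volume.restrict (Icc (0 : ℝ) 1)).map (quantile μ) = μ := by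
  refine (Measure.ext_of_Iic μ _ fun x => ?_).symm
  have h_Icc : Iic (cdf μ x) ∩ Icc 0 1 = Icc 0 (cdf μ x) := by
    ext t
    simp only [mem_inter_iff, mem_Iic, mem_Icc]
    exact ⟨fun h => ⟨h.2.1, h.1⟩, fun h => ⟨h.2, h.1, h.2.trans (cdf_le_one μ x)⟩⟩
  rw [Measure.map_apply (measurable_quantile μ) measurableSet_Iic,
    measure_congr (quantile_preimage_Iic_ae_eq μ x), Measure.restrict_apply measurableSet_Iic,
    h_Icc, Real.volume_Icc, sub_zero, ofReal_cdf]

theorem stmt16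
    (μ ν : Measure ℝ) [IsProbabilityMeasure μ] [IsProbabilityMeasure ν]
    (Fμ Fν : ℝ → ℝ)
    (hFμ : ∀ x, Fμ x = (μ (Iic x)).toReal)
    (hFν : ∀ y, Fν y = (ν (Iic y)).toReal)
    -- `C` is a bivariate copula: the restriction to `[0,1]²` of the joint CDF of a
    -- probability measure `γ` on `ℝ²` whose marginals are uniform on `[0,1]`
    (C : ℝ → ℝ → ℝ) (γ : Measure (ℝ × ℝ)) [IsProbabilityMeasure γ]
    (hγ1 : γ.map Prod.fst = volume.restrict (Icc (0:ℝ) 1))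
    (hγ2 : γ.map Prod.snd = volume.restrict (Icc (0:ℝ) 1))
    (hC : ∀ u ∈ Icc (0:ℝ) 1, ∀ v ∈ Icc (0:ℝ) 1,
      C u v = (γ (Iic u ×ˢ Iic v)).toReal) :
    ∃ p : Measure (ℝ × ℝ), IsProbabilityMeasure p ∧
      (∀ x y : ℝ, (p (Iic x ×ˢ Iic y)).toReal = C (Fμ x) (Fν y)) ∧
      (∀ x : ℝ, (p (Iic x ×ˢ (univ : Set ℝ))).toReal = Fμ x) ∧
      (∀ y : ℝ, (p ((univ : Set ℝ) ×ˢ Iic y)).toReal = Fν y) := by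
  obtain rfl : Fμ = cdf μ := funext fun x => (hFμ x).trans (cdf_eq_real μ x).symm
  obtain rfl : Fν = cdf ν := funext fun y => (hFν y).trans (cdf_eq_real ν y).symm
  have hγ_fst : γ.fst = volume.restrict (Icc 0 1) := hγ1
  have hγ_snd : γ.snd = volume.restrict (Icc 0 1) := hγ2
  have hT : Measurable (Prod.map (quantile μ) (quantile ν)) :=
    (measurable_quantile μ).prodMap (measurable_quantile ν)
  set p := γ.map (Prod.map (quantile μ) (quantile ν))
  have hp_fst : p.fst = μ := by
    rw [Measure.fst_map_prodMap (measurable_quantile μ) (measurable_quantile ν), hγ_fst,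
      map_quantile_restrict_Icc]
  have hp_snd : p.snd = ν := by
    rw [Measure.snd_map_prodMap (measurable_quantile μ) (measurable_quantile ν), hγ_snd,
      map_quantile_restrict_Icc]
  refine ⟨p, Measure.isProbabilityMeasure_map hT.aemeasurable, fun x y => ?_, fun x => ?_,
    fun y => ?_⟩
  · have h_ae := Measure.set_prod_ae_eq_of_fst_snd (hγ_fst ▸ quantile_preimage_Iic_ae_eq μ x)
      (hγ_snd ▸ quantile_preimage_Iic_ae_eq ν y)
    rw [Measure.map_apply hT (measurableSet_Iic.prod measurableSet_Iic), preimage_prod_map_prod,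
      measure_congr h_ae, hC _ ⟨cdf_nonneg μ x, cdf_le_one μ x⟩ _ ⟨cdf_nonneg ν y, cdf_le_one ν y⟩]
  · rw [prod_univ, ← Measure.fst_apply measurableSet_Iic, hp_fst, cdf_eq_real, measureReal_def]
  · rw [univ_prod, ← Measure.snd_apply measurableSet_Iic, hp_snd, cdf_eq_real, measureReal_def]
end
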